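/- Let S be an RNA sequence of length n and let 2 ≤ i ≤ t ≤ o < j ≤ n. Then P[i,j,t,o] ≤ P[i−1,j,t,o] ≤ P[i,j,t,o] + 1. -/

import Mathlib

/-- The four RNA nucleotides. -/
inductive Nucleotide : Type
  | A | C | G | U
  deriving DecidableEq

open Nucleotide in
/-- `bp a b = 1` iff `{a,b} = {A,U}` or `{a,b} = {G,C}`, else `0`. -/
def bp : Nucleotide → Nucleotide → ℕ
  | A, U => 1
  | U, A => 1
  | G, C => 1
  | C, G => 1
  | _, _ => 0

/-- `L` is a (pseudoknot-free) secondary structure on `S[i..j]`: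
all pairs `(a,b)` satisfy `i ≤ a < b ≤ j` and are complementary,
no position occurs in two pairs, and no two pairs cross. -/
def IsSecStruct (S : ℕ → Nucleotide) (i j : ℕ) (L : Finset (ℕ × ℕ)) : Prop :=
  (∀ p ∈ L, i ≤ p.1 ∧ p.1 < p.2 ∧ p.2 ≤ j ∧ bp (S p.1) (S p.2) = 1) ∧
  (∀ p ∈ L, ∀ q ∈ L, p ≠ q →
    p.1 ≠ q.1 ∧ p.1 ≠ q.2 ∧ p.2 ≠ q.1 ∧ p.2 ≠ q.2) ∧
  (∀ p ∈ L, ∀ q ∈ L, ¬ (p.1 < q.1 ∧ q.1 < p.2 ∧ p.2 < q.2))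

/-- `M S i j` : maximum number of base pairs in a secondary structure on `S[i..j]`. -/
noncomputable def M (S : ℕ → Nucleotide) (i j : ℕ) : ℕ :=
  sSup {m : ℕ | ∃ L : Finset (ℕ × ℕ), IsSecStruct S i j L ∧ L.card = m}

/-- `P S i j t o = max_{t ≤ l ≤ o} (M[i,l] + M[l+1,j])`. -/
noncomputable def P (S : ℕ → Nucleotide) (i j t o : ℕ) : ℕ :=
  (Finset.Icc t o).sup fun l => M S i l + M S (l + 1) j

/-- A `(t,o)` partial set for `(i,j)` : a secondary structure on `S[i..j]`
containing no pair `(g,h)` with `i ≤ g < t` and `o < h ≤ j`. -/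
def IsPartialSet (S : ℕ → Nucleotide) (i j t o : ℕ) (L : Finset (ℕ × ℕ)) : Prop :=
  IsSecStruct S i j L ∧ ∀ p ∈ L, ¬ (i ≤ p.1 ∧ p.1 < t ∧ o < p.2 ∧ p.2 ≤ j)

lemma secStruct_empty (S : ℕ → Nucleotide) (i j : ℕ) : IsSecStruct S i j ∅ := by
  refine ⟨?_, ?_, ?_⟩ <;> simp

lemma secStruct_nonempty (S : ℕ → Nucleotide) (i j : ℕ) :
    (0 : ℕ) ∈ {m : ℕ | ∃ L : Finset (ℕ × ℕ), IsSecStruct S i j L ∧ L.card = m} :=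
  ⟨∅, secStruct_empty S i j, rfl⟩

lemma secStruct_card_le {S : ℕ → Nucleotide} {i j : ℕ} {L : Finset (ℕ × ℕ)}
    (h : IsSecStruct S i j L) : L.card ≤ (j + 1) * (j + 1) := by
  have hsub : L ⊆ Finset.range (j + 1) ×ˢ Finset.range (j + 1) := by
    intro p hp
    obtain ⟨h1, h2, h3, _⟩ := h.1 p hp
    simp only [Finset.mem_product, Finset.mem_range]
    exact ⟨lt_of_le_of_lt (le_trans (le_of_lt h2) h3) (Nat.lt_succ_self j),
      lt_of_le_of_lt h3 (Nat.lt_succ_self j)⟩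
  calc L.card ≤ (Finset.range (j + 1) ×ˢ Finset.range (j + 1)).card :=
        Finset.card_le_card hsub
    _ = (j + 1) * (j + 1) := by simp [Finset.card_product]

lemma secStruct_bdd (S : ℕ → Nucleotide) (i j : ℕ) :
    BddAbove {m : ℕ | ∃ L : Finset (ℕ × ℕ), IsSecStruct S i j L ∧ L.card = m} := by
  refine ⟨(j + 1) * (j + 1), ?_⟩
  rintro m ⟨L, hL, rfl⟩
  exact secStruct_card_le hL

lemma card_le_M {S : ℕ → Nucleotide} {i j : ℕ} {L : Finset (ℕ × ℕ)}
    (h : IsSecStruct S i j L) : L.card ≤ M S i j :=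
  le_csSup (secStruct_bdd S i j) ⟨L, h, rfl⟩

lemma M_le {S : ℕ → Nucleotide} {i j k : ℕ}
    (h : ∀ L : Finset (ℕ × ℕ), IsSecStruct S i j L → L.card ≤ k) : M S i j ≤ k := by
  refine csSup_le ⟨0, secStruct_nonempty S i j⟩ ?_
  rintro m ⟨L, hL, rfl⟩
  exact h L hL

lemma M_mono {S : ℕ → Nucleotide} {i i' j : ℕ} (h : i' ≤ i) : M S i j ≤ M S i' j := by
  refine M_le fun L hL => card_le_M ?_
  obtain ⟨h1, h2, h3⟩ := hL
  exact ⟨fun p hp => ⟨le_trans h (h1 p hp).1, (h1 p hp).2⟩, h2, h3⟩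

lemma M_pred_le {S : ℕ → Nucleotide} {k j : ℕ} : M S k j ≤ M S (k + 1) j + 1 := by
  refine M_le fun L hL => ?_
  obtain ⟨h1, h2, h3⟩ := hL
  set L' := L.filter (fun p => ¬ p.1 = k) with hL'def
  have hsub : L' ⊆ L := Finset.filter_subset _ _
  have hL' : IsSecStruct S (k + 1) j L' := by
    refine ⟨fun p hp => ?_, fun p hp q hq => h2 p (hsub hp) q (hsub hq),
      fun p hp q hq => h3 p (hsub hp) q (hsub hq)⟩
    obtain ⟨hpk, hne⟩ := Finset.mem_filter.mp hp
    obtain ⟨ha, hb, hc, hd⟩ := h1 p (hsub hp)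
    exact ⟨lt_of_le_of_ne ha (Ne.symm hne), hb, hc, hd⟩
  have hone : (L.filter (fun p => p.1 = k)).card ≤ 1 := by
    refine Finset.card_le_one.mpr fun p hp q hq => ?_
    obtain ⟨hpL, hpk⟩ := Finset.mem_filter.mp hp
    obtain ⟨hqL, hqk⟩ := Finset.mem_filter.mp hq
    by_contra hne
    exact (h2 p hpL q hqL hne).1 (hpk.trans hqk.symm)
  have hcard : L.card ≤ L'.card + 1 := by
    have := Finset.card_filter_add_card_filter_not
      (s := L) (p := fun p => p.1 = k)
    rw [hL'def]
    omega
  exact le_trans hcard (add_le_add_left (card_le_M hL') 1)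

/-- For `2 ≤ i ≤ t ≤ o < j ≤ n`, `P[i,j,t,o] ≤ P[i-1,j,t,o] ≤ P[i,j,t,o] + 1`. -/
theorem stmt_9 (n : ℕ) (S : ℕ → Nucleotide) (i j t o : ℕ)
    (hi : 2 ≤ i) (hit : i ≤ t) (hto : t ≤ o) (hoj : o < j) (hjn : j ≤ n) :
    P S i j t o ≤ P S (i - 1) j t o ∧ P S (i - 1) j t o ≤ P S i j t o + 1 := by
  have hpred : i - 1 + 1 = i := by omega
  unfold P
  constructor
  · refine Finset.sup_le fun l hl => ?_
    calc M S i l + M S (l + 1) j ≤ M S (i - 1) l + M S (l + 1) j :=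
          add_le_add_left (M_mono (Nat.sub_le i 1)) _
      _ ≤ _ := Finset.le_sup (f := fun l => M S (i - 1) l + M S (l + 1) j) hl
  · refine Finset.sup_le fun l hl => ?_
    have h1 : M S (i - 1) l ≤ M S i l + 1 := by
      have := M_pred_le (S := S) (k := i - 1) (j := l)
      rwa [hpred] at this
    calc M S (i - 1) l + M S (l + 1) j ≤ (M S i l + M S (l + 1) j) + 1 := by omega
      _ ≤ _ + 1 := add_le_add_left
          (Finset.le_sup (f := fun l => M S i l + M S (l + 1) j) hl) 1
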